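/- arXiv:2511.13605 — 5 statements merged into one kernel-verified Lean document; each statement's English description precedes it below -/
import Mathlib

section
/- For any nonnegative monotone submodular function f on a finite ground set E with multilinear extension F, any real p ∈ [0,1], and any vectors x, y ∈ [0,1]^E with y ≥ p·x coordinatewise, we have F(y) ≥ p·F(x). -/
/-!
Scaling `x` by `p` amounts to keeping each element of the random set independently with
probability `p`: `F(p • x)` is the multilinear extension of `T ↦ 𝔼 f(T(p))`, where `T(p)` is a
`p`-subsample of `T`. Adding the elements of `T` one at a time, submodularity gives
`𝔼 f(T(p)) ≥ p f(T) + (1 - p) f(∅) ≥ p f(T)`, hence `F(p • x) ≥ p F(x)`. Since `f` is monotone,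
`F` is monotone in each coordinate on the cube, so `F(y) ≥ F(p • x)`.
-/

open Finset

/-- The multilinear extension of a set function. -/
noncomputable def multilinear {E : Type*} [Fintype E] [DecidableEq E]
    (f : Finset E → ℝ) (x : E → ℝ) : ℝ :=
  ∑ S : Finset E, f S * (∏ i ∈ S, x i) * ∏ i ∈ Sᶜ, (1 - x i)

section SubsampleMean

variable {E : Type*} [DecidableEq E]

/-- `𝔼 f(T(p))`, where the random set `T(p) ⊆ T` contains each element of `T` independently
with probability `p`. -/
noncomputable def subsampleMean (f : Finset E → ℝ) (p : ℝ) (T : Finset E) : ℝ :=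
  ∑ S ∈ T.powerset, p ^ #S * (1 - p) ^ #(T \ S) * f S

theorem sum_powerset_pow_mul_pow_sdiff (p : ℝ) (T : Finset E) :
    ∑ S ∈ T.powerset, p ^ #S * (1 - p) ^ #(T \ S) = 1 := by
  simpa [prod_const] using (prod_add (fun _ => p) (fun _ => 1 - p) T).symm

theorem subsampleMean_add_const (f : Finset E → ℝ) (p c : ℝ) (T : Finset E) :
    subsampleMean (fun S => f S + c) p T = subsampleMean f p T + c := by
  simp only [subsampleMean, mul_add, sum_add_distrib, ← sum_mul,
    sum_powerset_pow_mul_pow_sdiff, one_mul]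

theorem subsampleMean_mono {f g : Finset E → ℝ} {p : ℝ} (hp : p ∈ Set.Icc (0 : ℝ) 1)
    {T : Finset E} (hfg : ∀ S ⊆ T, f S ≤ g S) : subsampleMean f p T ≤ subsampleMean g p T :=
  sum_le_sum fun S hS => mul_le_mul_of_nonneg_left (hfg S (mem_powerset.1 hS))
    (mul_nonneg (pow_nonneg hp.1 _) (pow_nonneg (sub_nonneg.2 hp.2) _))

theorem subsampleMean_insert (f : Finset E → ℝ) (p : ℝ) {k : E} {T : Finset E} (hk : k ∉ T) :
    subsampleMean f p (insert k T) =
      (1 - p) * subsampleMean f p T + p * subsampleMean (fun S => f (insert k S)) p T := by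
  rw [subsampleMean, sum_powerset_insert hk, subsampleMean, subsampleMean, mul_sum, mul_sum]
  congr 1 <;> refine sum_congr rfl fun S hS => ?_
  · have hkS : k ∉ S := fun h => hk (mem_powerset.1 hS h)
    rw [insert_sdiff_of_notMem _ hkS, card_insert_of_notMem fun h => hk (mem_sdiff.1 h).1]
    ring
  · have hkS : k ∉ S := fun h => hk (mem_powerset.1 hS h)
    rw [insert_sdiff_insert, sdiff_insert_of_notMem hk, card_insert_of_notMem hkS]
    ring

theorem le_subsampleMean_of_submodular {f : Finset E → ℝ}
    (hsub : ∀ S T : Finset E, S ⊆ T → ∀ i ∉ T, f (insert i T) - f T ≤ f (insert i S) - f S)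
    {p : ℝ} (hp : p ∈ Set.Icc (0 : ℝ) 1) (T : Finset E) :
    p * f T + (1 - p) * f ∅ ≤ subsampleMean f p T := by
  induction T using Finset.induction_on with
  | empty =>
    simp only [subsampleMean, powerset_empty, sum_singleton, empty_sdiff, card_empty, pow_zero,
      one_mul]
    linarith
  | insert k T hk ih =>
    have hmarg : subsampleMean (fun S => f S + (f (insert k T) - f T)) p T ≤
        subsampleMean (fun S => f (insert k S)) p T :=
      subsampleMean_mono hp fun S hS => by linarith [hsub S T hS k hk]
    rw [subsampleMean_add_const] at hmarg
    rw [subsampleMean_insert f p hk]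
    linarith [mul_le_mul_of_nonneg_left hmarg hp.1]

end SubsampleMean

theorem prod_mul_prod_one_sub_nonneg {E : Type*} {x : E → ℝ} (hx : ∀ i, x i ∈ Set.Icc (0 : ℝ) 1)
    (S T : Finset E) : 0 ≤ (∏ i ∈ S, x i) * ∏ i ∈ T, (1 - x i) :=
  mul_nonneg (prod_nonneg fun i _ => (hx i).1) (prod_nonneg fun i _ => sub_nonneg.2 (hx i).2)

theorem sum_sum_powerset_compl_union {E M : Type*} [Fintype E] [DecidableEq E]
    [AddCommMonoid M] (g : Finset E → Finset E → M) :
    ∑ S, ∑ U ∈ Sᶜ.powerset, g S (S ∪ U) = ∑ T, ∑ S ∈ T.powerset, g S T := by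
  rw [sum_sigma', sum_sigma']
  refine sum_nbij' (fun q => ⟨q.1 ∪ q.2, q.1⟩) (fun q => ⟨q.2, q.1 \ q.2⟩) ?_ ?_ ?_ ?_ ?_
  · rintro ⟨S, U⟩ -
    simpa only [mem_sigma, mem_univ, mem_powerset, true_and] using subset_union_left
  · rintro ⟨T, S⟩ -
    simpa [subset_compl_iff_disjoint_left] using disjoint_sdiff
  · rintro ⟨S, U⟩ hU
    simp only [mem_sigma, mem_powerset, subset_compl_iff_disjoint_left] at hU
    simp only [union_sdiff_cancel_left hU.2]
  · rintro ⟨T, S⟩ hS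
    simp only [mem_sigma, mem_powerset] at hS
    simp only [union_sdiff_of_subset hS.2]
  · intros
    rfl

section Multilinear

variable {E : Type*} [Fintype E] [DecidableEq E]

theorem multilinear_const_mul (c : ℝ) (f : Finset E → ℝ) (x : E → ℝ) :
    multilinear (fun S => c * f S) x = c * multilinear f x := by
  simp only [multilinear, mul_sum, mul_assoc]

theorem multilinear_le_multilinear {f g : Finset E → ℝ} {x : E → ℝ}
    (hx : ∀ i, x i ∈ Set.Icc (0 : ℝ) 1) (hfg : ∀ S, f S ≤ g S) :
    multilinear f x ≤ multilinear g x :=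
  sum_le_sum fun S _ => by
    simp only [mul_assoc]
    exact mul_le_mul_of_nonneg_right (hfg S) (prod_mul_prod_one_sub_nonneg hx _ _)

theorem multilinear_mul_eq_multilinear_subsampleMean (f : Finset E → ℝ) (p : ℝ) (x : E → ℝ) :
    multilinear f (fun i => p * x i) = multilinear (subsampleMean f p) x := by
  have expand (S : Finset E) : ∏ i ∈ Sᶜ, (1 - p * x i) =
      ∑ U ∈ Sᶜ.powerset, (∏ i ∈ U, (1 - p) * x i) * ∏ i ∈ Sᶜ \ U, (1 - x i) := by
    rw [← prod_add]
    exact prod_congr rfl fun i _ => by ring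
  have regroup (S : Finset E) (U) (hU : U ∈ Sᶜ.powerset) :
      f S * (∏ i ∈ S, p * x i) * ((∏ i ∈ U, (1 - p) * x i) * ∏ i ∈ Sᶜ \ U, (1 - x i)) =
        p ^ #S * (1 - p) ^ #((S ∪ U) \ S) * f S *
          ((∏ i ∈ S ∪ U, x i) * ∏ i ∈ (S ∪ U)ᶜ, (1 - x i)) := by
    have hSU : Disjoint S U := subset_compl_iff_disjoint_left.1 (mem_powerset.1 hU)
    rw [union_sdiff_cancel_left hSU, prod_union hSU, compl_union, ← sdiff_eq_inter_compl,
      prod_mul_distrib, prod_mul_distrib, prod_const, prod_const]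
    ring
  calc multilinear f (fun i => p * x i)
      = ∑ S, ∑ U ∈ Sᶜ.powerset, p ^ #S * (1 - p) ^ #((S ∪ U) \ S) * f S *
          ((∏ i ∈ S ∪ U, x i) * ∏ i ∈ (S ∪ U)ᶜ, (1 - x i)) := by
        simp only [multilinear, expand, mul_sum]
        exact sum_congr rfl fun S _ => sum_congr rfl (regroup S)
    _ = ∑ T, ∑ S ∈ T.powerset, p ^ #S * (1 - p) ^ #(T \ S) * f S *
          ((∏ i ∈ T, x i) * ∏ i ∈ Tᶜ, (1 - x i)) :=
        sum_sum_powerset_compl_union fun S T =>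
          p ^ #S * (1 - p) ^ #(T \ S) * f S * ((∏ i ∈ T, x i) * ∏ i ∈ Tᶜ, (1 - x i))
    _ = multilinear (subsampleMean f p) x := by
        simp only [multilinear, subsampleMean, sum_mul, mul_assoc]

theorem multilinear_eq_sum_powerset_erase (f : Finset E → ℝ) (w : E → ℝ) (k : E) :
    multilinear f w = ∑ S ∈ (univ.erase k).powerset,
      (∏ i ∈ S, w i) * (∏ i ∈ Sᶜ.erase k, (1 - w i)) * (f S + w k * (f (insert k S) - f S)) := by
  rw [multilinear, ← powerset_univ, ← insert_erase (mem_univ k),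
    sum_powerset_insert (notMem_erase k univ), insert_erase (mem_univ k), ← sum_add_distrib]
  refine sum_congr rfl fun S hS => ?_
  have hkS : k ∉ S := fun h => notMem_erase k univ (mem_powerset.1 hS h)
  rw [compl_insert, prod_insert hkS, ← mul_prod_erase Sᶜ _ (mem_compl.2 hkS)]
  ring

theorem multilinear_le_update {f : Finset E → ℝ} (hmono : ∀ S T, S ⊆ T → f S ≤ f T)
    {u : E → ℝ} (hu : ∀ i, u i ∈ Set.Icc (0 : ℝ) 1) {k : E} {a : ℝ} (ha : u k ≤ a) :
    multilinear f u ≤ multilinear f (Function.update u k a) := by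
  rw [multilinear_eq_sum_powerset_erase f u k, multilinear_eq_sum_powerset_erase f _ k]
  refine sum_le_sum fun S hS => ?_
  have hkS : k ∉ S := fun h => notMem_erase k univ (mem_powerset.1 hS h)
  have hprodS : ∏ i ∈ S, Function.update u k a i = ∏ i ∈ S, u i :=
    prod_congr rfl fun i hi => Function.update_of_ne (ne_of_mem_of_not_mem hi hkS) _ _
  have hprodSc : ∏ i ∈ Sᶜ.erase k, (1 - Function.update u k a i) = ∏ i ∈ Sᶜ.erase k, (1 - u i) :=
    prod_congr rfl fun i hi => by rw [Function.update_of_ne (ne_of_mem_erase hi)]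
  have hmarg : 0 ≤ f (insert k S) - f S := sub_nonneg.2 (hmono _ _ (subset_insert k S))
  rw [hprodS, hprodSc, Function.update_self]
  gcongr
  exact prod_mul_prod_one_sub_nonneg hu _ _

theorem multilinear_mono {f : Finset E → ℝ} (hmono : ∀ S T, S ⊆ T → f S ≤ f T)
    {z y : E → ℝ} (hz : ∀ i, z i ∈ Set.Icc (0 : ℝ) 1) (hy : ∀ i, y i ∈ Set.Icc (0 : ℝ) 1)
    (hzy : ∀ i, z i ≤ y i) : multilinear f z ≤ multilinear f y := by
  have hpiecewise (A : Finset E) : multilinear f z ≤ multilinear f (A.piecewise y z) := by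
    induction A using Finset.induction_on with
    | empty => simp
    | insert k A hk ih =>
      rw [piecewise_insert]
      have hA (i : E) : A.piecewise y z i ∈ Set.Icc (0 : ℝ) 1 :=
        A.piecewise_cases y z _ (hy i) (hz i)
      refine ih.trans (multilinear_le_update hmono hA ?_)
      rw [piecewise_eq_of_notMem _ _ _ hk]
      exact hzy k
  simpa using hpiecewise univ

end Multilinear

/-- For nonnegative monotone submodular `f` with multilinear extension `F`,
`p ∈ [0,1]` and `y ≥ p·x` coordinatewise with `x, y ∈ [0,1]^E`, we have `F(y) ≥ p·F(x)`. -/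
theorem stmt0 {E : Type*} [Fintype E] [DecidableEq E] (f : Finset E → ℝ)
    (hnn : ∀ S, 0 ≤ f S)
    (hmono : ∀ S T, S ⊆ T → f S ≤ f T)
    (hsub : ∀ S T : Finset E, S ⊆ T → ∀ i ∉ T,
      f (insert i T) - f T ≤ f (insert i S) - f S)
    (p : ℝ) (hp : p ∈ Set.Icc (0 : ℝ) 1)
    (x y : E → ℝ)
    (hx : ∀ i, x i ∈ Set.Icc (0 : ℝ) 1) (hy : ∀ i, y i ∈ Set.Icc (0 : ℝ) 1)
    (hyx : ∀ i, p * x i ≤ y i) :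
    p * multilinear f x ≤ multilinear f y := by
  have hpx (i : E) : p * x i ∈ Set.Icc (0 : ℝ) 1 :=
    ⟨mul_nonneg hp.1 (hx i).1, mul_le_one₀ hp.2 (hx i).1 (hx i).2⟩
  have hsample (T : Finset E) : p * f T ≤ subsampleMean f p T := by
    linarith [le_subsampleMean_of_submodular hsub hp T, mul_nonneg (sub_nonneg.2 hp.2) (hnn ∅)]
  calc p * multilinear f x
      = multilinear (fun T => p * f T) x := (multilinear_const_mul p f x).symm
    _ ≤ multilinear (subsampleMean f p) x := multilinear_le_multilinear hx hsample
    _ = multilinear f (fun i => p * x i) :=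
        (multilinear_mul_eq_multilinear_subsampleMean f p x).symm
    _ ≤ multilinear f y := multilinear_mono hmono hpx hy hyx
end

section
/- For any nonnegative submodular function f on a finite ground set E and any nonnegative vector x ∈ [0,1]^E, the function r ↦ F(r·x) is concave on [0,1], where F is the multilinear extension of f. -/
/-! Writing `F_s` for `multilinearOn s`, expanding along a coordinate `a ∉ s` gives
`F_{insert a s}(f) = (1 - y a) • F_s(f) + y a • F_s(f ∘ insert a)`. Induction along this identity
shows both that `d/dr F(r • x) = ∑ i, x i • F_{E \ i}(Δᵢ f)(r • x)`, where
`Δᵢ f S = f (insert i S) - f S`, and that the multilinear extension of a set function antitone on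
subsets is antitone on `[0,1]^E`. Submodularity says exactly that each `Δᵢ f` is antitone, so the
derivative decreases in `r`. -/

open Finset

section

variable {E : Type*} [DecidableEq E]

noncomputable def multilinearOn (s : Finset E) (f : Finset E → ℝ) (y : E → ℝ) : ℝ :=
  ∑ S ∈ s.powerset, f S * (∏ i ∈ S, y i) * ∏ i ∈ s \ S, (1 - y i)

def marginal (f : Finset E → ℝ) (i : E) (S : Finset E) : ℝ :=
  f (insert i S) - f S

lemma multilinear_eq_multilinearOn_univ [Fintype E] (f : Finset E → ℝ) (y : E → ℝ) :
    multilinear f y = multilinearOn univ f y := by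
  simp only [multilinear, multilinearOn, powerset_univ, compl_eq_univ_sdiff]

@[simp]
lemma multilinearOn_empty (f : Finset E → ℝ) (y : E → ℝ) : multilinearOn ∅ f y = f ∅ := by
  simp [multilinearOn]

lemma multilinearOn_insert {a : E} {s : Finset E} (ha : a ∉ s) (f : Finset E → ℝ)
    (y : E → ℝ) :
    multilinearOn (insert a s) f y =
      (1 - y a) * multilinearOn s f y + y a * multilinearOn s (fun S => f (insert a S)) y := by
  rw [multilinearOn, sum_powerset_insert ha, multilinearOn, multilinearOn, mul_sum, mul_sum]
  congr 1 <;> refine sum_congr rfl fun S hS => ?_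
  · have haS : a ∉ s \ S := fun h => ha (mem_sdiff.mp h).1
    rw [insert_sdiff_of_notMem _ fun h => ha (mem_powerset.mp hS h), prod_insert haS]
    ring
  · have haS : a ∉ S := fun h => ha (mem_powerset.mp hS h)
    rw [prod_insert haS, insert_sdiff_insert, sdiff_insert_of_notMem ha]
    ring

lemma multilinearOn_marginal (s : Finset E) (f : Finset E → ℝ) (a : E) (y : E → ℝ) :
    multilinearOn s (marginal f a) y =
      multilinearOn s (fun S => f (insert a S)) y - multilinearOn s f y := by
  simp only [multilinearOn, marginal, ← sum_sub_distrib]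
  exact sum_congr rfl fun S _ => by ring

lemma marginal_insert_comm (f : Finset E → ℝ) (i a : E) (S : Finset E) :
    marginal f i (insert a S) = marginal (fun T => f (insert a T)) i S := by
  simp only [marginal, insert_comm]

lemma hasDerivAt_multilinearOn_smul (s : Finset E) (f : Finset E → ℝ) (x : E → ℝ) (r : ℝ) :
    HasDerivAt (fun r => multilinearOn s f (fun i => r * x i))
      (∑ i ∈ s, x i * multilinearOn (s.erase i) (marginal f i) (fun i => r * x i)) r := by
  induction s using Finset.induction_on generalizing f with
  | empty => simpa using hasDerivAt_const r (f ∅)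
  | insert a s ha ih =>
    simp only [multilinearOn_insert ha]
    have hlin : HasDerivAt (fun r => r * x a) (x a) r := by
      simpa using (hasDerivAt_id r).mul_const (x a)
    refine (((hlin.const_sub 1).mul (ih f)).add
      (hlin.mul (ih fun S => f (insert a S)))).congr_deriv ?_
    rw [sum_insert ha, erase_insert ha, multilinearOn_marginal]
    have hsum : ∑ i ∈ s, x i * multilinearOn ((insert a s).erase i) (marginal f i)
        (fun i => r * x i) =
          (1 - r * x a) * ∑ i ∈ s, x i * multilinearOn (s.erase i) (marginal f i)
            (fun i => r * x i) + r * x a * ∑ i ∈ s, x i * multilinearOn (s.erase i)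
              (marginal (fun T => f (insert a T)) i) (fun i => r * x i) := by
      rw [mul_sum, mul_sum, ← sum_add_distrib]
      refine sum_congr rfl fun i hi => ?_
      rw [erase_insert_of_ne (ne_of_mem_of_not_mem hi ha).symm,
        multilinearOn_insert fun h => ha (mem_of_mem_erase h)]
      simp only [marginal_insert_comm]
      ring
    rw [hsum]
    ring

lemma multilinearOn_mono {s : Finset E} {f g : Finset E → ℝ} (hfg : ∀ S ⊆ s, f S ≤ g S)
    {y : E → ℝ} (h0 : 0 ≤ y) (h1 : y ≤ 1) : multilinearOn s f y ≤ multilinearOn s g y := by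
  refine sum_le_sum fun S hS => ?_
  gcongr
  · exact prod_nonneg fun i _ => sub_nonneg.mpr (h1 i)
  · exact prod_nonneg fun i _ => h0 i
  · exact hfg S (mem_powerset.mp hS)

lemma multilinearOn_antitone {s : Finset E} {f : Finset E → ℝ} (hf : AntitoneOn f (Set.Iic s))
    {y y' : E → ℝ} (h0 : 0 ≤ y) (hyy : y ≤ y') (h1 : y' ≤ 1) :
    multilinearOn s f y' ≤ multilinearOn s f y := by
  induction s using Finset.induction_on generalizing f with
  | empty => simp
  | insert a s ha ih =>
    have hs : Set.Iic s ⊆ Set.Iic (insert a s) := Set.Iic_subset_Iic.mpr (subset_insert a s)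
    have hf₁ : AntitoneOn (fun S => f (insert a S)) (Set.Iic s) := fun S hS T hT hST =>
      hf (insert_subset_insert a hS) (insert_subset_insert a hT) (insert_subset_insert a hST)
    have h₀₁ : multilinearOn s (fun S => f (insert a S)) y ≤ multilinearOn s f y :=
      multilinearOn_mono (fun S hS => hf (hs hS) (insert_subset_insert a hS) (subset_insert a S))
        h0 (hyy.trans h1)
    have ih₀ := ih (hf.mono hs)
    have ih₁ := ih hf₁
    rw [multilinearOn_insert ha, multilinearOn_insert ha]
    have ha0 : 0 ≤ y a := h0 a
    have ha1 : y' a ≤ 1 := h1 a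
    have haa : y a ≤ y' a := hyy a
    linarith [mul_le_mul_of_nonneg_left ih₀ (sub_nonneg.mpr ha1),
      mul_le_mul_of_nonneg_left ih₁ (ha0.trans haa),
      mul_le_mul_of_nonneg_left h₀₁ (sub_nonneg.mpr haa)]

theorem concaveOn_multilinearOn_smul {s : Finset E} {f : Finset E → ℝ}
    (hf : ∀ i ∈ s, AntitoneOn (marginal f i) (Set.Iic (s.erase i)))
    {x : E → ℝ} (h0 : 0 ≤ x) (h1 : x ≤ 1) :
    ConcaveOn ℝ (Set.Icc 0 1) (fun r : ℝ => multilinearOn s f (fun i => r * x i)) := by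
  have hd := hasDerivAt_multilinearOn_smul s f x
  refine AntitoneOn.concaveOn_of_deriv (convex_Icc 0 1)
    (fun r _ => (hd r).continuousAt.continuousWithinAt)
    (fun r _ => (hd r).differentiableAt.differentiableWithinAt) ?_
  rw [interior_Icc]
  intro r hr r' hr' hrr'
  simp only [(hd _).deriv]
  refine sum_le_sum fun i hi => mul_le_mul_of_nonneg_left
    (multilinearOn_antitone (hf i hi) (fun j => ?_) (fun j => ?_) (fun j => ?_)) (h0 i)
  · exact mul_nonneg hr.1.le (h0 j)
  · exact mul_le_mul_of_nonneg_right hrr' (h0 j)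
  · exact mul_le_one₀ hr'.2.le (h0 j) (h1 j)

end

theorem stmt1_general {E : Type*} [Fintype E] [DecidableEq E] (f : Finset E → ℝ)
    (hsub : ∀ S T : Finset E, S ⊆ T → ∀ i ∉ T,
      f (insert i T) - f T ≤ f (insert i S) - f S)
    (x : E → ℝ) (hx : ∀ i, x i ∈ Set.Icc (0 : ℝ) 1) :
    ConcaveOn ℝ (Set.Icc (0 : ℝ) 1) (fun r : ℝ => multilinear f (fun i => r * x i)) := by
  simp only [multilinear_eq_multilinearOn_univ]
  exact concaveOn_multilinearOn_smul
    (fun i _ S _ T hT hST => hsub S T hST i fun hi => notMem_erase i univ (hT hi))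
    (fun i => (hx i).1) (fun i => (hx i).2)

/-- For nonnegative submodular `f` and `x ∈ [0,1]^E`, the map `r ↦ F(r·x)` is
concave on `[0,1]`. -/
theorem stmt1 {E : Type*} [Fintype E] [DecidableEq E] (f : Finset E → ℝ)
    (hnn : ∀ S, 0 ≤ f S)
    (hsub : ∀ S T : Finset E, S ⊆ T → ∀ i ∉ T,
      f (insert i T) - f T ≤ f (insert i S) - f S)
    (x : E → ℝ) (hx : ∀ i, x i ∈ Set.Icc (0 : ℝ) 1) :
    ConcaveOn ℝ (Set.Icc (0 : ℝ) 1) (fun r : ℝ => multilinear f (fun i => r * x i)) :=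
  stmt1_general f hsub x hx
end

section
/- Let f be a subadditive nonnegative set function on a finite ground set E, let A ⊆ E, k ≥ 1, ε ∈ (0,1), and let L(A) = {e ∈ A : f({e}) ≥ (ε/k)·max_{e'∈A} f({e'})}. Then max{f(S) : S ⊆ L(A), |S| ≤ k} ≥ (1−ε)·max{f(S) : S ⊆ A, |S| ≤ k}. -/
open Finset
open scoped Classical

/-!
Let `S` be an optimal set for `A` and `M` the largest singleton value on `A`. By subadditivity,
`f S` is at most `f` of its large elements, a subset of `L(A)`, plus the singleton values of its
at most `k` small elements, each below `(ε/k)·M`. Hence `OPT(A) ≤ OPT(L(A)) + ε·M`, and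
`M ≤ OPT(A)` because every singleton of `A` is feasible.
-/

section Subadditive

variable {E : Type*} [DecidableEq E]

theorem nonneg_of_subadditive {β : Type*} [AddCommGroup β] [PartialOrder β]
    [IsOrderedAddMonoid β] {f : Finset E → β} (hf : ∀ S T, f (S ∪ T) ≤ f S + f T)
    (S : Finset E) : 0 ≤ f S := by
  simpa [union_self] using hf S S

theorem le_add_sum_singleton_of_subadditive {β : Type*} [AddCommMonoid β] [PartialOrder β]
    [IsOrderedAddMonoid β] {f : Finset E → β} (hf : ∀ S T, f (S ∪ T) ≤ f S + f T)
    (S T : Finset E) : f (S ∪ T) ≤ f S + ∑ e ∈ T, f {e} := by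
  induction T using Finset.induction_on with
  | empty => simp
  | @insert a T ha ih =>
    calc f (S ∪ insert a T) = f ({a} ∪ (S ∪ T)) := by
          rw [union_insert, insert_eq]
      _ ≤ f {a} + f (S ∪ T) := hf _ _
      _ ≤ f {a} + (f S + ∑ e ∈ T, f {e}) := by gcongr
      _ = f S + ∑ e ∈ insert a T, f {e} := by
          rw [sum_insert ha, add_left_comm]

theorem le_filter_add_card_mul_of_subadditive {f : Finset E → ℝ}
    (hf : ∀ S T, f (S ∪ T) ≤ f S + f T) (S : Finset E) {τ : ℝ} (hτ : 0 ≤ τ) :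
    f S ≤ f (S.filter fun e => τ ≤ f {e}) + #S * τ := by
  set small := S.filter fun e => ¬τ ≤ f {e}
  have hsmall : ∑ e ∈ small, f {e} ≤ #S * τ :=
    calc ∑ e ∈ small, f {e} ≤ ∑ _e ∈ small, τ :=
          sum_le_sum fun e he => (not_le.mp (mem_filter.mp he).2).le
      _ = #small * τ := by rw [sum_const, nsmul_eq_mul]
      _ ≤ #S * τ := by
          gcongr
          exact filter_subset _ _
  have h := le_add_sum_singleton_of_subadditive hf (S.filter fun e => τ ≤ f {e}) small
  rw [filter_union_filter_not_eq] at h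
  linarith

end Subadditive

/-- For subadditive nonnegative `f`, restricting to large elements
`L(A) = {e ∈ A : f({e}) ≥ (ε/k)·max_{e'∈A} f({e'})}` loses at most a `(1−ε)` factor in the
cardinality-constrained maximum. -/
theorem stmt4 {E : Type*} [DecidableEq E] (f : Finset E → ℝ)
    (hsubadd : ∀ S T : Finset E, f (S ∪ T) ≤ f S + f T)
    (A : Finset E) (hA : A.Nonempty) (k : ℕ) (hk : 1 ≤ k)
    (ε : ℝ) (hε : ε ∈ Set.Ioo (0 : ℝ) 1) :
    (1 - ε) * ((A.powerset.filter (fun S => S.card ≤ k)).sup'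
        ⟨∅, by simp⟩ f)
      ≤ (((A.filter (fun e =>
            (ε / k) * (A.sup' hA fun e' => f {e'}) ≤ f {e})).powerset.filter
          (fun S => S.card ≤ k)).sup' ⟨∅, by simp⟩ f) := by
  obtain ⟨b, hb, hbM⟩ := exists_mem_eq_sup' hA fun e' => f {e'}
  set M := A.sup' hA fun e' => f {e'}
  set τ := ε / k * M
  have hτ : 0 ≤ τ := mul_nonneg (div_nonneg hε.1.le k.cast_nonneg)
    (hbM ▸ nonneg_of_subadditive hsubadd _)
  obtain ⟨S, hS, hSopt⟩ := exists_mem_eq_sup' (⟨∅, by simp⟩ :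
    (A.powerset.filter fun S => #S ≤ k).Nonempty) f
  rw [mem_filter, mem_powerset] at hS
  rw [hSopt]
  have hlarge : S.filter (fun e => τ ≤ f {e}) ∈
      (A.filter fun e => τ ≤ f {e}).powerset.filter fun T => #T ≤ k :=
    mem_filter.mpr ⟨mem_powerset.mpr (filter_subset_filter _ hS.1),
      (card_filter_le _ _).trans hS.2⟩
  have hcard : #S * τ ≤ ε * M := by
    calc (#S : ℝ) * τ ≤ k * τ := by gcongr; exact_mod_cast hS.2
      _ = ε * M := by
          simp only [τ]
          field_simp
  have hMS : M ≤ f S := by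
    rw [hbM, ← hSopt]
    exact le_sup' f (mem_filter.mpr
      ⟨mem_powerset.mpr (singleton_subset_iff.mpr hb), by simpa using hk⟩)
  calc (1 - ε) * f S = f S - ε * f S := by ring
    _ ≤ f S - ε * M := by gcongr; exact hε.1.le
    _ ≤ _ := by linarith [le_filter_add_card_mul_of_subadditive hsubadd S hτ, le_sup' f hlarge]
end

section
/- Let f be a monotone submodular function with f(∅)=0 and total curvature c ∈ (0,1], and define g(S) = (1/c)·(f(S) − (1−c)·∑_{i∈S} f({i})). Then g is nonnegative, monotone, and submodular, and g(S) ≤ f(S) for all S ⊆ E. -/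
/-!
Subtracting the modular function `(1 - c) ℓ_f` shifts the marginal gain of each element `i` by the
constant `(1 - c) f {i}`, so `g` inherits diminishing returns from `f`. By submodularity and total
curvature, every marginal gain of `f` at `i` is at least `f(i | E ∖ {i}) ≥ (1 - c) f {i}`, so the
marginal gains of `g` are nonnegative. Finally `f ≤ ℓ_f` (subadditivity) gives `g ≤ f`.
-/

open Finset

section

variable {E : Type*} [DecidableEq E]

def HasDiminishingReturns (f : Finset E → ℝ) : Prop :=
  ∀ S T : Finset E, S ⊆ T → ∀ i ∉ T, f (insert i T) - f T ≤ f (insert i S) - f S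

namespace HasDiminishingReturns

variable {f g : Finset E → ℝ}

theorem marginal_univ_le [Fintype E] (hf : HasDiminishingReturns f) {S : Finset E} {i : E}
    (hi : i ∉ S) : f univ - f (univ.erase i) ≤ f (insert i S) - f S := by
  have hS : S ⊆ univ.erase i := fun x hx => mem_erase.2 ⟨ne_of_mem_of_not_mem hx hi, mem_univ x⟩
  simpa [insert_erase (mem_univ i)] using hf S (univ.erase i) hS i (notMem_erase i _)

theorem le_sum_singleton (hf : HasDiminishingReturns f) (h0 : f ∅ = 0) (S : Finset E) :
    f S ≤ ∑ i ∈ S, f {i} := by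
  induction S using Finset.induction_on with
  | empty => simp [h0]
  | insert a s ha ih =>
    have hmarg := hf ∅ s (empty_subset s) a ha
    rw [insert_empty, h0, sub_zero] at hmarg
    rw [sum_insert ha]
    linarith

section ModularShift

variable {a b : ℝ} {w : E → ℝ}

theorem insert_sub_eq_of_eq_mul_sub_sum (hg : ∀ S, g S = a * (f S - b * ∑ i ∈ S, w i))
    {S : Finset E} {i : E} (hi : i ∉ S) :
    g (insert i S) - g S = a * (f (insert i S) - f S - b * w i) := by
  rw [hg, hg, sum_insert hi]
  ring

theorem of_eq_mul_sub_sum (hf : HasDiminishingReturns f) (ha : 0 ≤ a)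
    (hg : ∀ S, g S = a * (f S - b * ∑ i ∈ S, w i)) : HasDiminishingReturns g := by
  intro S T hST i hi
  rw [insert_sub_eq_of_eq_mul_sub_sum hg hi,
    insert_sub_eq_of_eq_mul_sub_sum hg (fun h => hi (hST h))]
  exact mul_le_mul_of_nonneg_left (by linarith [hf S T hST i hi]) ha

theorem monotone_of_eq_mul_sub_sum (ha : 0 ≤ a)
    (hw : ∀ S i, i ∉ S → b * w i ≤ f (insert i S) - f S)
    (hg : ∀ S, g S = a * (f S - b * ∑ i ∈ S, w i)) : Monotone g := by
  refine monotone_iff_forall_le_insert.2 fun S i hi => sub_nonneg.1 ?_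
  rw [insert_sub_eq_of_eq_mul_sub_sum hg hi]
  exact mul_nonneg ha (sub_nonneg.2 (hw S i hi))

end ModularShift

theorem le_of_eq_inv_mul_sub_sum (hf : HasDiminishingReturns f) (h0 : f ∅ = 0) {c : ℝ}
    (hc : c ∈ Set.Ioc (0 : ℝ) 1) (hg : ∀ S, g S = (1 / c) * (f S - (1 - c) * ∑ i ∈ S, f {i}))
    (S : Finset E) : g S ≤ f S := by
  have hsum := mul_le_mul_of_nonneg_left (hf.le_sum_singleton h0 S) (sub_nonneg.2 hc.2)
  rw [hg, one_div, inv_mul_le_iff₀ hc.1]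
  linarith

end HasDiminishingReturns

end

theorem stmt6_general {E : Type*} [Fintype E] [DecidableEq E] (f : Finset E → ℝ)
    (h0 : f ∅ = 0)
    (hsub : ∀ S T : Finset E, S ⊆ T → ∀ i ∉ T,
      f (insert i T) - f T ≤ f (insert i S) - f S)
    (c : ℝ) (hc : c ∈ Set.Ioc (0 : ℝ) 1)
    (hcurv : ∀ i : E, (1 - c) * f {i} ≤ f Finset.univ - f (Finset.univ.erase i))
    (g : Finset E → ℝ)
    (hg : ∀ S, g S = (1 / c) * (f S - (1 - c) * ∑ i ∈ S, f {i})) :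
    (∀ S, 0 ≤ g S) ∧
    (∀ S T, S ⊆ T → g S ≤ g T) ∧
    (∀ S T : Finset E, S ⊆ T → ∀ i ∉ T,
      g (insert i T) - g T ≤ g (insert i S) - g S) ∧
    (∀ S, g S ≤ f S) := by
  have hf : HasDiminishingReturns f := hsub
  have hinv : 0 ≤ 1 / c := one_div_nonneg.2 hc.1.le
  have hmono : Monotone g := HasDiminishingReturns.monotone_of_eq_mul_sub_sum hinv
    (fun _ i hi => (hcurv i).trans (hf.marginal_univ_le hi)) hg
  have hg0 : g ∅ = 0 := by simp [hg, h0]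
  exact ⟨fun S => hg0 ▸ hmono (empty_subset S), fun _ _ hST => hmono hST,
    hf.of_eq_mul_sub_sum hinv hg, hf.le_of_eq_inv_mul_sub_sum h0 hc hg⟩

/-- Curvature decomposition: for monotone submodular normalized `f` with total curvature
`c ∈ (0,1]`, the function `g(S) = (1/c)·(f(S) − (1−c)·∑_{i∈S} f({i}))` is nonnegative,
monotone and submodular, and satisfies `g ≤ f`. -/
theorem stmt6 {E : Type*} [Fintype E] [DecidableEq E] (f : Finset E → ℝ)
    (hnn : ∀ S, 0 ≤ f S) (h0 : f ∅ = 0)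
    (hmono : ∀ S T, S ⊆ T → f S ≤ f T)
    (hsub : ∀ S T : Finset E, S ⊆ T → ∀ i ∉ T,
      f (insert i T) - f T ≤ f (insert i S) - f S)
    (c : ℝ) (hc : c ∈ Set.Ioc (0 : ℝ) 1)
    (hcurv : ∀ i : E, (1 - c) * f {i} ≤ f Finset.univ - f (Finset.univ.erase i))
    (g : Finset E → ℝ)
    (hg : ∀ S, g S = (1 / c) * (f S - (1 - c) * ∑ i ∈ S, f {i})) :
    (∀ S, 0 ≤ g S) ∧
    (∀ S T, S ⊆ T → g S ≤ g T) ∧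
    (∀ S T : Finset E, S ⊆ T → ∀ i ∉ T,
      g (insert i T) - g T ≤ g (insert i S) - g S) ∧
    (∀ S, g S ≤ f S) :=
  stmt6_general f h0 hsub c hc hcurv g hg
end

section
/- Let V > 0, ε ∈ (0,1), and let φ : [0,1] → ℝ be continuously differentiable, nondecreasing, with φ(0) ≥ 0 and φ(1) ≤ (1 − 1/e − ε)·V. Then the Lebesgue measure of the set {t ∈ [0,1] : φ(t) + φ'(t) < V(1−ε)} is at least ε. -/
/-! With `c = V(1 - ε)`, the gap `c - φ` stays above `V/e` on `[0,1]`, so `ψ = -log (c - φ)` is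
nondecreasing with `ψ' = φ' / (c - φ) ≥ 1` wherever `φ + φ' ≥ c`. That set therefore has measure
at most `ψ 1 - ψ 0 ≤ log c - log (V/e) = 1 + log (1 - ε) ≤ 1 - ε`, and its complement in `[0,1]`
has measure at least `ε`. -/

open MeasureTheory Set Real

theorem MonotoneOn.nonneg_of_hasDerivAt {f : ℝ → ℝ} {f' a b x : ℝ}
    (hf : MonotoneOn f (Icc a b)) (hab : a < b) (hx : x ∈ Icc a b) (hd : HasDerivAt f f' x) :
    0 ≤ f' := by
  rw [← hd.hasDerivWithinAt.derivWithin (uniqueDiffOn_Icc hab x hx)]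
  exact hf.derivWithin_nonneg

theorem MonotoneOn.volume_le_sub_of_one_le_deriv {f f' : ℝ → ℝ} {a b : ℝ} {A : Set ℝ}
    (hf : MonotoneOn f (Icc a b)) (hab : a < b) (hd : ∀ x ∈ Icc a b, HasDerivAt f (f' x) x)
    (hA : MeasurableSet A) (hAab : A ⊆ Icc a b) (hA1 : ∀ x ∈ A, 1 ≤ f' x) :
    volume A ≤ ENNReal.ofReal (f b - f a) := by
  have hf'_nonneg : ∀ x ∈ Ioc a b, 0 ≤ f' x := fun x hx =>
    hf.nonneg_of_hasDerivAt hab (Ioc_subset_Icc_self hx) (hd x (Ioc_subset_Icc_self hx))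
  have hcont : ContinuousOn f (Icc a b) := fun x hx => (hd x hx).continuousAt.continuousWithinAt
  have hd' : ∀ x ∈ Ioo a b, HasDerivAt f (f' x) x := fun x hx => hd x (Ioo_subset_Icc_self hx)
  have hint : IntegrableOn f' (Ioc a b) := intervalIntegral.integrableOn_deriv_of_nonneg hcont hd'
    fun x hx => hf'_nonneg x (Ioo_subset_Ioc_self hx)
  have hftc : ∫ x in Ioc a b, f' x = f b - f a := by
    rw [← intervalIntegral.integral_of_le hab.le]
    exact intervalIntegral.integral_eq_sub_of_hasDerivAt_of_le hab.le hcont hd'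
      ((intervalIntegrable_iff_integrableOn_Ioc_of_le hab.le).2 hint)
  calc volume A = ∫⁻ _ in A, 1 := (setLIntegral_one A).symm
    _ ≤ ∫⁻ x in A, ENNReal.ofReal (f' x) :=
        setLIntegral_mono' hA fun x hx => ENNReal.one_le_ofReal.2 (hA1 x hx)
    _ ≤ ∫⁻ x in Icc a b, ENNReal.ofReal (f' x) := lintegral_mono_set hAab
    _ = ∫⁻ x in Ioc a b, ENNReal.ofReal (f' x) := setLIntegral_congr Ioc_ae_eq_Icc.symm
    _ = ENNReal.ofReal (f b - f a) := by
        rw [← hftc, ofReal_integral_eq_lintegral_ofReal hint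
          (ae_restrict_of_forall_mem measurableSet_Ioc hf'_nonneg)]

theorem measurableSet_setOf_le_add_of_hasDerivAt {φ φ' : ℝ → ℝ} {a b c : ℝ} (hab : a ≤ b)
    (hd : ∀ t ∈ Icc a b, HasDerivAt φ (φ' t) t) :
    MeasurableSet {t ∈ Icc a b | c ≤ φ t + φ' t} := by
  -- On `[a, b]`, `φ'` is the Borel measurable `deriv φ` and `φ` is the continuous `φ ∘ projIcc`.
  have hφ : Continuous fun t => φ (projIcc a b hab t) :=
    ContinuousOn.comp_continuous (fun t ht => (hd t ht).continuousAt.continuousWithinAt)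
      (continuous_subtype_val.comp continuous_projIcc) fun t => (projIcc a b hab t).2
  have hset : {t ∈ Icc a b | c ≤ φ t + φ' t} =
      Icc a b ∩ {t | c ≤ φ (projIcc a b hab t) + deriv φ t} := by
    ext t
    refine and_congr_right fun ht => ?_
    simp only [mem_ofPred_eq, projIcc_of_mem hab ht, (hd t ht).deriv]
  rw [hset]
  exact measurableSet_Icc.inter
    (measurableSet_le measurable_const (hφ.measurable.add (measurable_deriv φ)))

theorem ofReal_le_measure_sep_not {α : Type*} [MeasurableSpace α] {μ : Measure α} {s : Set α}
    {p : α → Prop} {x y : ℝ} (hx : 0 ≤ x) (hy : 0 ≤ y) (hs : μ s = ENNReal.ofReal (x + y))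
    (hp : μ {a ∈ s | p a} ≤ ENNReal.ofReal x) : ENNReal.ofReal y ≤ μ {a ∈ s | ¬ p a} := by
  refine ENNReal.le_of_add_le_add_left (a := ENNReal.ofReal x) ENNReal.ofReal_ne_top ?_
  calc ENNReal.ofReal x + ENNReal.ofReal y = μ s := by rw [hs, ENNReal.ofReal_add hx hy]
    _ ≤ μ {a ∈ s | p a} + μ {a ∈ s | ¬ p a} := measure_le_inter_add_sdiff μ s {a | p a}
    _ ≤ ENNReal.ofReal x + μ {a ∈ s | ¬ p a} := by gcongr

theorem log_sub_log_le_one_sub {V ε x y : ℝ} (hV : 0 < V) (hε : ε < 1) (hx : 0 < x)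
    (hxV : x ≤ V * (1 - ε)) (hVy : V * exp (-1) ≤ y) : log x - log y ≤ 1 - ε :=
  calc log x - log y ≤ log (V * (1 - ε)) - log (V * exp (-1)) :=
        sub_le_sub (log_le_log hx hxV) (log_le_log (by positivity) hVy)
    _ = 1 + log (1 - ε) := by
        rw [log_mul hV.ne' (by linarith), log_mul hV.ne' (exp_pos _).ne', log_exp]; ring
    _ ≤ 1 - ε := by linarith [log_le_sub_one_of_pos (by linarith : 0 < 1 - ε)]

theorem stmt12_general (V ε : ℝ) (hV : 0 < V) (hε : ε ∈ Set.Ioo (0 : ℝ) 1)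
    (φ φ' : ℝ → ℝ)
    (hderiv : ∀ t ∈ Set.Icc (0 : ℝ) 1, HasDerivAt φ (φ' t) t)
    (hmono : MonotoneOn φ (Set.Icc (0 : ℝ) 1))
    (h0 : 0 ≤ φ 0)
    (h1 : φ 1 ≤ (1 - Real.exp (-1) - ε) * V) :
    ENNReal.ofReal ε ≤ volume {t ∈ Set.Icc (0 : ℝ) 1 | φ t + φ' t < V * (1 - ε)} := by
  obtain ⟨hε0, hε1⟩ := hε
  set c := V * (1 - ε)
  have hgap : ∀ t ∈ Icc (0 : ℝ) 1, V * exp (-1) ≤ c - φ t := fun t ht => by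
    linarith [hmono ht (right_mem_Icc.2 zero_le_one) ht.2]
  have hgap_pos : ∀ t ∈ Icc (0 : ℝ) 1, 0 < c - φ t := fun t ht =>
    (by positivity : 0 < V * exp (-1)).trans_le (hgap t ht)
  have hψ_mono : MonotoneOn (fun t => -log (c - φ t)) (Icc 0 1) := fun s hs t ht hst =>
    neg_le_neg (log_le_log (hgap_pos t ht) (by linarith [hmono hs ht hst]))
  have hψ_deriv : ∀ t ∈ Icc (0 : ℝ) 1,
      HasDerivAt (fun t => -log (c - φ t)) (φ' t / (c - φ t)) t := fun t ht => by
    simpa [neg_div] using (((hderiv t ht).const_sub c).log (hgap_pos t ht).ne').fun_neg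
  have hψ_growth : -log (c - φ 1) - -log (c - φ 0) ≤ 1 - ε := by
    rw [neg_sub_neg]
    exact log_sub_log_le_one_sub hV hε1 (hgap_pos 0 (left_mem_Icc.2 zero_le_one))
      (by linarith) (hgap 1 (right_mem_Icc.2 zero_le_one))
  have hA : volume {t ∈ Icc (0 : ℝ) 1 | c ≤ φ t + φ' t} ≤ ENNReal.ofReal (1 - ε) := by
    refine (hψ_mono.volume_le_sub_of_one_le_deriv zero_lt_one hψ_deriv
      (measurableSet_setOf_le_add_of_hasDerivAt zero_le_one hderiv) (sep_subset _ _)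
      fun t ht => ?_).trans (ENNReal.ofReal_le_ofReal hψ_growth)
    rw [one_le_div (hgap_pos t ht.1)]
    linarith [ht.2]
  simpa only [not_le] using ofReal_le_measure_sep_not (by linarith) hε0.le
    (by rw [Real.volume_Icc]; ring_nf) hA

/-- Core of approximate-or-separate: if `φ` is `C¹`, nondecreasing, `φ(0) ≥ 0` and
`φ(1) ≤ (1 − 1/e − ε)·V`, then the set `{t ∈ [0,1] : φ(t) + φ'(t) < V(1−ε)}`
has Lebesgue measure at least `ε`. -/
theorem stmt12 (V ε : ℝ) (hV : 0 < V) (hε : ε ∈ Set.Ioo (0 : ℝ) 1)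
    (φ φ' : ℝ → ℝ)
    (hderiv : ∀ t ∈ Set.Icc (0 : ℝ) 1, HasDerivAt φ (φ' t) t)
    (hcont : ContinuousOn φ' (Set.Icc (0 : ℝ) 1))
    (hmono : MonotoneOn φ (Set.Icc (0 : ℝ) 1))
    (h0 : 0 ≤ φ 0)
    (h1 : φ 1 ≤ (1 - Real.exp (-1) - ε) * V) :
    ENNReal.ofReal ε ≤ volume {t ∈ Set.Icc (0 : ℝ) 1 | φ t + φ' t < V * (1 - ε)} :=
  stmt12_general V ε hV hε φ φ' hderiv hmono h0 h1
end
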